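/- Assume Ω is finitely connected at x₀ ∈ ∂Ω, and let {E_k} be a chain with x₀ ∈ ⋂_{k=1}^∞ cl(E_k). Then there exists a prime chain {F_k} with impression {x₀} that divides {E_k}. If moreover {E_k} is prime, then {F_k} is equivalent to {E_k} and the impression of {E_k} is {x₀}. -/
import Mathlib

open Metric Set Filter Topology

/-- The distance between two subsets of a metric space
(infimum of pairwise distances, with `sInf ∅ = 0`). -/
noncomputable def setDist {X : Type*} [MetricSpace X] (A B : Set X) : ℝ :=
  sInf {d : ℝ | ∃ a ∈ A, ∃ b ∈ B, d = dist a b}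

/-- `Ω` is a bounded domain: bounded, nonempty, open, connected, and not all of `X`. -/
def BoundedDomain {X : Type*} [MetricSpace X] (Ω : Set X) : Prop :=
  IsOpen Ω ∧ IsConnected Ω ∧ Bornology.IsBounded Ω ∧ Ω ≠ Set.univ

/-- An acceptable set: a bounded connected set `E ⊊ Ω` whose closure meets `∂Ω`. -/
def Acceptable {X : Type*} [MetricSpace X] (Ω E : Set X) : Prop :=
  Bornology.IsBounded E ∧ IsConnected E ∧ E ⊆ Ω ∧ E ≠ Ω ∧
    (closure E ∩ frontier Ω).Nonempty

/-- A chain in `Ω`: a nested sequence of acceptable sets whose consecutive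
relative boundaries are at positive distance and whose impression
`⋂ k, closure (E k)` lies in `∂Ω`. -/
def IsChainIn {X : Type*} [MetricSpace X] (Ω : Set X) (E : ℕ → Set X) : Prop :=
  (∀ k, Acceptable Ω (E k)) ∧
  (∀ k, E (k + 1) ⊆ E k) ∧
  (∀ k, 0 < setDist (Ω ∩ frontier (E (k + 1))) (Ω ∩ frontier (E k))) ∧
  (⋂ k, closure (E k)) ⊆ frontier Ω

/-- A chain `E` divides a chain `F` if each `F k` contains some `E l`. -/
def Divides {X : Type*} (E F : ℕ → Set X) : Prop := ∀ k, ∃ l, E l ⊆ F k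

/-- Two chains are equivalent if each divides the other. -/
def EquivChains {X : Type*} (E F : ℕ → Set X) : Prop := Divides E F ∧ Divides F E

/-- A prime chain: a chain such that every chain dividing it is equivalent to it. -/
def IsPrimeChain {X : Type*} [MetricSpace X] (Ω : Set X) (E : ℕ → Set X) : Prop :=
  IsChainIn Ω E ∧ ∀ F : ℕ → Set X, IsChainIn Ω F → Divides F E → EquivChains F E

/-- A boundary point `x` is accessible if some curve in `Ω` ends at `x`. -/
def Accessible {X : Type*} [MetricSpace X] (Ω : Set X) (x : X) : Prop :=
  ∃ γ : ℝ → X, ContinuousOn γ (Set.Icc 0 1) ∧ γ 1 = x ∧ γ '' Set.Ico 0 1 ⊆ Ω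

/-- `Ω` is finitely connected at `x₀` if each ball around `x₀` contains an open
neighborhood `G` of `x₀` such that `G ∩ Ω` has finitely many components. -/
def FinitelyConnectedAt {X : Type*} [MetricSpace X] (Ω : Set X) (x₀ : X) : Prop :=
  ∀ r : ℝ, 0 < r → ∃ G : Set X, IsOpen G ∧ x₀ ∈ G ∧ G ⊆ Metric.ball x₀ r ∧
    {C : Set X | ∃ y ∈ G ∩ Ω, C = connectedComponentIn (G ∩ Ω) y}.Finite

/- ======================= Auxiliary lemmas ======================= -/

lemma aux_closure_inter_open {X : Type*} [TopologicalSpace X] {A G : Set X} {x : X}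
    (hx : x ∈ closure A) (hG : IsOpen G) (hxG : x ∈ G) : x ∈ closure (G ∩ A) := by
  rw [mem_closure_iff_nhds] at hx ⊢
  intro t ht
  obtain ⟨z, hz⟩ := hx (t ∩ G) (Filter.inter_mem ht (hG.mem_nhds hxG))
  exact ⟨z, hz.1.1, hz.1.2, hz.2⟩

/-- A preconnected set meeting both `A` and its complement meets `frontier A`. -/
lemma aux_frontier_cross {X : Type*} [TopologicalSpace X] {S A : Set X}
    (hS : IsPreconnected S) (h1 : (S ∩ A).Nonempty) (h2 : (S \ A).Nonempty) :
    (S ∩ frontier A).Nonempty := by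
  by_contra hc
  rw [Set.not_nonempty_iff_eq_empty] at hc
  have hdis : ∀ x ∈ S, x ∉ frontier A := fun x hxS hxF =>
    (Set.eq_empty_iff_forall_notMem.mp hc x) ⟨hxS, hxF⟩
  have hcover : S ⊆ interior A ∪ (closure A)ᶜ := by
    intro x hxS
    by_cases hca : x ∈ closure A
    · by_cases hia : x ∈ interior A
      · exact Or.inl hia
      · exact absurd ⟨hca, hia⟩ (hdis x hxS)
    · exact Or.inr hca
  obtain ⟨p, hpS, hpA⟩ := h1
  obtain ⟨q, hqS, hqA⟩ := h2
  have hpu : p ∈ interior A := by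
    rcases hcover hpS with h | h
    · exact h
    · exact absurd (subset_closure hpA) h
  have hqv : q ∈ (closure A)ᶜ := by
    rcases hcover hqS with h | h
    · exact absurd (interior_subset h) hqA
    · exact h
  obtain ⟨w, hwS, hwu, hwv⟩ :=
    hS (interior A) (closure A)ᶜ isOpen_interior isClosed_closure.isOpen_compl hcover
      ⟨p, hpS, hpu⟩ ⟨q, hqS, hqv⟩
  exact hwv ((interior_subset.trans subset_closure) hwu)

/-- A decreasing sequence of nonempty subsets of a finite set has a common element. -/
lemma aux_iInter_nonempty {α : Type*} {U : Set α} (hU : U.Finite) (T : ℕ → Set α)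
    (hmono : ∀ m, T (m + 1) ⊆ T m) (hne : ∀ m, (T m).Nonempty) (hsub : ∀ m, T m ⊆ U) :
    ∃ a, ∀ m, a ∈ T m := by
  have hanti : Antitone T := antitone_nat_of_succ_le hmono
  choose c hc using hne
  have : Finite U := hU.to_subtype
  obtain ⟨y, hy⟩ := Finite.exists_infinite_fiber (fun m => (⟨c m, hsub m (hc m)⟩ : U))
  rw [Set.infinite_coe_iff] at hy
  refine ⟨(y : α), fun m => ?_⟩
  obtain ⟨m', hm'fib, hm'ge⟩ : ∃ m', (⟨c m', hsub m' (hc m')⟩ : U) = y ∧ m ≤ m' := by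
    by_contra h
    push_neg at h
    refine hy ((Set.finite_Iio m).subset ?_)
    intro z hz
    simp only [Set.mem_preimage, Set.mem_singleton_iff] at hz
    exact h z hz
  have hcy : c m' = (y : α) := congrArg Subtype.val hm'fib
  have := hanti hm'ge (hc m')
  rwa [hcy] at this

lemma setDist_le_dist {X : Type*} [MetricSpace X] {A B : Set X} {a b : X}
    (ha : a ∈ A) (hb : b ∈ B) : setDist A B ≤ dist a b := by
  refine csInf_le ⟨0, ?_⟩ ⟨a, ha, b, hb, rfl⟩
  rintro d ⟨a', -, b', -, rfl⟩
  exact dist_nonneg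

lemma le_setDist {X : Type*} [MetricSpace X] {A B : Set X} {c : ℝ}
    (hA : A.Nonempty) (hB : B.Nonempty) (h : ∀ a ∈ A, ∀ b ∈ B, c ≤ dist a b) :
    c ≤ setDist A B := by
  refine le_csInf ⟨dist hA.some hB.some, hA.some, hA.some_mem, hB.some, hB.some_mem, rfl⟩ ?_
  rintro d ⟨a, ha, b, hb, rfl⟩
  exact h a ha b hb

/-- The invariant carried along the construction: `F` is an open preconnected subset
of `Ω` inside `B(x₀, δ)`, whose closure contains points of every `E m` near `x₀`,
which absorbs preconnected subsets of `B(x₀, ε) ∩ Ω` meeting it, and whose relative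
boundary stays outside `B(x₀, ε)`. -/
def GoodSet {X : Type*} [MetricSpace X] (Ω : Set X) (x₀ : X) (E : ℕ → Set X)
    (ε δ : ℝ) (F : Set X) : Prop :=
  F ⊆ Ω ∧ IsOpen F ∧ IsPreconnected F ∧ F ⊆ Metric.ball x₀ δ ∧
    (∀ m, x₀ ∈ closure (F ∩ E m)) ∧ 0 < ε ∧
    (∀ C : Set X, IsPreconnected C → C ⊆ Metric.ball x₀ ε ∩ Ω → (C ∩ F).Nonempty → C ⊆ F) ∧
    Ω ∩ frontier F ∩ Metric.ball x₀ ε = ∅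

lemma good_step {X : Type*} [MetricSpace X] [LocallyConnectedSpace X]
    {Ω : Set X} (hΩo : IsOpen Ω) {x₀ : X} (hfc : FinitelyConnectedAt Ω x₀)
    {E : ℕ → Set X} (hEΩ : ∀ m, E m ⊆ Ω) (hEm : ∀ m, E (m + 1) ⊆ E m)
    {S : Set X} {ε δ : ℝ} (hS : GoodSet Ω x₀ E ε δ S)
    {δ' : ℝ} (hδ'pos : 0 < δ') (hδ'ε : δ' ≤ ε) :
    ∃ F ε', F ⊆ S ∧ GoodSet Ω x₀ E ε' δ' F := by
  obtain ⟨hSΩ, hSo, hSc, hSb, hScl, hεpos, habs, hfr⟩ := hS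
  obtain ⟨G, hGo, hx₀G, hGb, hGfin⟩ := hfc δ' hδ'pos
  obtain ⟨ε₀, hε₀pos, hε₀G⟩ := Metric.mem_nhds_iff.mp (hGo.mem_nhds hx₀G)
  set ε' := min ε₀ δ' with hε'def
  have hε'pos : 0 < ε' := lt_min hε₀pos hδ'pos
  have hε'G : Metric.ball x₀ ε' ⊆ G := (Metric.ball_subset_ball (min_le_left _ _)).trans hε₀G
  set W := G ∩ Ω with hWdef
  have hWo : IsOpen W := hGo.inter hΩo
  have hWb : W ⊆ Metric.ball x₀ δ' := fun z hz => hGb hz.1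
  have hWε : W ⊆ Metric.ball x₀ ε ∩ Ω := fun z hz =>
    ⟨Metric.ball_subset_ball hδ'ε (hGb hz.1), hz.2⟩
  -- any component of `W` meeting `S` is contained in `S`
  have habs' : ∀ z ∈ W, z ∈ S → connectedComponentIn W z ⊆ S := fun z hzW hzS =>
    habs _ isPreconnected_connectedComponentIn
      ((connectedComponentIn_subset W z).trans hWε)
      ⟨z, mem_connectedComponentIn hzW, hzS⟩
  set T : ℕ → Set (Set X) := fun m =>
    {C | (∃ y ∈ W, C = connectedComponentIn W y ∧ y ∈ S) ∧ x₀ ∈ closure (C ∩ E m)} with hT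
  have hTsub : ∀ m, T m ⊆ {C : Set X | ∃ y ∈ W, C = connectedComponentIn W y} := by
    rintro m C ⟨⟨y, hyW, rfl, -⟩, -⟩
    exact ⟨y, hyW, rfl⟩
  have hTmono : ∀ m, T (m + 1) ⊆ T m := by
    rintro m C ⟨h1, h2⟩
    exact ⟨h1, closure_mono (inter_subset_inter_right _ (hEm m)) h2⟩
  have hTne : ∀ m, (T m).Nonempty := by
    intro m
    have hx : x₀ ∈ closure (G ∩ (S ∩ E m)) := aux_closure_inter_open (hScl m) hGo hx₀G
    set 𝒞 : Set (Set X) := {C | ∃ y ∈ G ∩ (S ∩ E m), C = connectedComponentIn W y} with h𝒞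
    have h𝒞fin : 𝒞.Finite := by
      refine hGfin.subset ?_
      rintro C ⟨y, hy, rfl⟩
      exact ⟨y, ⟨hy.1, hEΩ m hy.2.2⟩, rfl⟩
    have hcover : G ∩ (S ∩ E m) ⊆ ⋃ C ∈ 𝒞, (C ∩ E m) := by
      intro y hy
      have hyW : y ∈ W := ⟨hy.1, hEΩ m hy.2.2⟩
      exact Set.mem_biUnion ⟨y, hy, rfl⟩ ⟨mem_connectedComponentIn hyW, hy.2.2⟩
    have hx2 : x₀ ∈ closure (⋃ C ∈ 𝒞, (C ∩ E m)) := closure_mono hcover hx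
    rw [h𝒞fin.closure_biUnion] at hx2
    obtain ⟨C, hC𝒞, hCx⟩ := Set.mem_iUnion₂.mp hx2
    obtain ⟨y, hy, rfl⟩ := hC𝒞
    exact ⟨connectedComponentIn W y, ⟨y, ⟨hy.1, hEΩ m hy.2.2⟩, rfl, hy.2.1⟩, hCx⟩
  obtain ⟨C₀, hC₀⟩ := aux_iInter_nonempty hGfin T hTmono hTne hTsub
  obtain ⟨y₀, hy₀W, hC₀eq, hy₀S⟩ := (hC₀ 0).1
  have hcl : ∀ m, x₀ ∈ closure (C₀ ∩ E m) := fun m => (hC₀ m).2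
  subst hC₀eq
  refine ⟨connectedComponentIn W y₀, ε', habs' y₀ hy₀W hy₀S,
    (connectedComponentIn_subset W y₀).trans inter_subset_right,
    hWo.connectedComponentIn, isPreconnected_connectedComponentIn,
    (connectedComponentIn_subset W y₀).trans hWb, hcl, hε'pos, ?_, ?_⟩
  · -- absorption property
    intro C hC hCb hCF
    obtain ⟨z, hzC, hzF⟩ := hCF
    have hCW : C ⊆ W := fun w hw => ⟨hε'G (hCb hw).1, (hCb hw).2⟩
    rw [connectedComponentIn_eq hzF]
    exact hC.subset_connectedComponentIn hzC hCW
  · -- relative boundary avoids the small ball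
    rw [Set.eq_empty_iff_forall_notMem]
    rintro z ⟨⟨hzΩ, hzfr⟩, hzb⟩
    have hzW : z ∈ W := ⟨hε'G hzb, hzΩ⟩
    rw [(hWo.connectedComponentIn (x := y₀)).frontier_eq] at hzfr
    obtain ⟨hzcl, hznF⟩ := hzfr
    obtain ⟨w, hwC, hwF⟩ := mem_closure_iff_nhds.mp hzcl _
      ((hWo.connectedComponentIn).mem_nhds (mem_connectedComponentIn hzW))
    have h1 : connectedComponentIn W z = connectedComponentIn W w :=
      connectedComponentIn_eq hwC
    have h2 : connectedComponentIn W y₀ = connectedComponentIn W w :=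
      connectedComponentIn_eq hwF
    exact hznF (h2 ▸ h1 ▸ mem_connectedComponentIn hzW)

/- ======================= Main theorem ======================= -/

/-- If `Ω` is finitely connected at `x₀ ∈ ∂Ω` and `E` is a chain with
`x₀` in its impression, then some prime chain `F` with impression `{x₀}`
divides `E`; if moreover `E` is prime, then `F` is equivalent to `E` and the
impression of `E` is `{x₀}`. -/
theorem statement12 {X : Type*} [MetricSpace X] [ProperSpace X] [LocallyConnectedSpace X]
    (Ω : Set X) (hΩ : BoundedDomain Ω)
    (x₀ : X) (hx₀ : x₀ ∈ frontier Ω) (hfc : FinitelyConnectedAt Ω x₀)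
    (E : ℕ → Set X) (hE : IsChainIn Ω E)
    (hx₀I : x₀ ∈ ⋂ k, closure (E k)) :
    ∃ F : ℕ → Set X, IsPrimeChain Ω F ∧ (⋂ k, closure (F k)) = {x₀} ∧
      Divides F E ∧
      (IsPrimeChain Ω E → EquivChains F E ∧ (⋂ k, closure (E k)) = {x₀}) := by
  classical
  obtain ⟨hΩo, hΩconn, hΩbd, hΩuniv⟩ := hΩ
  obtain ⟨hEacc, hEm, hEd, hEimp⟩ := hE
  have hEΩ : ∀ m, E m ⊆ Ω := fun m => (hEacc m).2.2.1
  have hx₀cl : ∀ m, x₀ ∈ closure (E m) := fun m => Set.mem_iInter.mp hx₀I m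
  have hx₀Ω : x₀ ∉ Ω := by
    intro h
    rw [hΩo.frontier_eq] at hx₀
    exact hx₀.2 h
  obtain ⟨y, hyΩ⟩ := hΩconn.nonempty
  have hR : 0 < dist y x₀ := dist_pos.mpr fun h => hx₀Ω (h ▸ hyΩ)
  set δ₀ : ℝ := min (dist y x₀) 1 with hδ₀def
  have hδ₀pos : 0 < δ₀ := lt_min hR one_pos
  obtain ⟨D, hD⟩ := hΩbd.subset_ball x₀
  have hbase : GoodSet Ω x₀ E δ₀ D Ω := by
    refine ⟨subset_rfl, hΩo, hΩconn.isPreconnected, hD, ?_, hδ₀pos, ?_, ?_⟩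
    · intro m
      rw [Set.inter_eq_self_of_subset_right (hEΩ m)]
      exact hx₀cl m
    · exact fun C _ hCb _ => hCb.trans inter_subset_right
    · rw [Set.eq_empty_iff_forall_notMem]
      rintro z ⟨⟨hzΩ, hzf⟩, -⟩
      rw [hΩo.frontier_eq] at hzf
      exact hzf.2 hzΩ
  -- one step of the recursion
  have rec0 : ∀ p : Set X × ℝ × ℝ, GoodSet Ω x₀ E p.2.1 p.2.2 p.1 →
      ∃ q : Set X × ℝ × ℝ, GoodSet Ω x₀ E q.2.1 q.2.2 q.1 ∧ q.1 ⊆ p.1 ∧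
        q.2.2 = min (p.2.1 / 2) (p.2.2 / 2) := by
    rintro ⟨S, ε, δ⟩ h
    have hεpos : 0 < ε := h.2.2.2.2.2.1
    have hδpos : 0 < δ := by
      obtain ⟨z, hz⟩ : S.Nonempty :=
        (closure_nonempty_iff.mp ⟨x₀, h.2.2.2.2.1 0⟩).mono inter_subset_left
      exact lt_of_le_of_lt dist_nonneg (mem_ball.mp (h.2.2.2.1 hz))
    have hδ'pos : 0 < min (ε / 2) (δ / 2) := lt_min (by linarith) (by linarith)
    have hδ'ε : min (ε / 2) (δ / 2) ≤ ε := (min_le_left _ _).trans (by linarith)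
    obtain ⟨F, ε', hFS, hGood⟩ := good_step hΩo hfc hEΩ hEm h hδ'pos hδ'ε
    exact ⟨(F, ε', min (ε / 2) (δ / 2)), hGood, hFS, rfl⟩
  -- first element
  obtain ⟨F0, ε0, -, hG0⟩ := good_step hΩo hfc hEΩ hEm hbase hδ₀pos (le_refl δ₀)
  -- the whole sequence
  obtain ⟨F, εs, δs, hGd, hFsub, hδsucc, hδ0⟩ :
      ∃ (F : ℕ → Set X) (εs δs : ℕ → ℝ),
        (∀ k, GoodSet Ω x₀ E (εs k) (δs k) (F k)) ∧
        (∀ k, F (k + 1) ⊆ F k) ∧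
        (∀ k, δs (k + 1) = min (εs k / 2) (δs k / 2)) ∧ δs 0 = δ₀ := by
    exact
      let g : ℕ → {p : Set X × ℝ × ℝ // GoodSet Ω x₀ E p.2.1 p.2.2 p.1} := fun k =>
        Nat.rec (motive := fun _ => {p : Set X × ℝ × ℝ // GoodSet Ω x₀ E p.2.1 p.2.2 p.1})
          ⟨(F0, ε0, δ₀), hG0⟩
          (fun _ q => ⟨(rec0 q.1 q.2).choose, (rec0 q.1 q.2).choose_spec.1⟩) k
      ⟨fun k => (g k).1.1, fun k => (g k).1.2.1, fun k => (g k).1.2.2,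
        fun k => (g k).2,
        fun k => (rec0 (g k).1 (g k).2).choose_spec.2.1,
        fun k => (rec0 (g k).1 (g k).2).choose_spec.2.2, rfl⟩
  -- basic properties of the sequence
  have hFΩ : ∀ k, F k ⊆ Ω := fun k => (hGd k).1
  have hFo : ∀ k, IsOpen (F k) := fun k => (hGd k).2.1
  have hFpc : ∀ k, IsPreconnected (F k) := fun k => (hGd k).2.2.1
  have hFb : ∀ k, F k ⊆ Metric.ball x₀ (δs k) := fun k => (hGd k).2.2.2.1
  have hFcl : ∀ k m, x₀ ∈ closure (F k ∩ E m) := fun k => (hGd k).2.2.2.2.1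
  have hεpos : ∀ k, 0 < εs k := fun k => (hGd k).2.2.2.2.2.1
  have hFfr : ∀ k, Ω ∩ frontier (F k) ∩ Metric.ball x₀ (εs k) = ∅ :=
    fun k => (hGd k).2.2.2.2.2.2.2
  have hFne : ∀ k, (F k).Nonempty := fun k =>
    (closure_nonempty_iff.mp ⟨x₀, hFcl k 0⟩).mono inter_subset_left
  have hδpos : ∀ k, 0 < δs k := fun k => by
    obtain ⟨z, hz⟩ := hFne k
    exact lt_of_le_of_lt dist_nonneg (mem_ball.mp (hFb k hz))
  have hδhalf : ∀ k, δs (k + 1) ≤ δs k / 2 := fun k => (hδsucc k) ▸ min_le_right _ _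
  have hδεhalf : ∀ k, δs (k + 1) ≤ εs k / 2 := fun k => (hδsucc k) ▸ min_le_left _ _
  have hδle : ∀ k, δs k ≤ (1 / 2 : ℝ) ^ k * δ₀ := by
    intro k
    induction k with
    | zero => simp [hδ0]
    | succ k ih =>
      calc δs (k + 1) ≤ δs k / 2 := hδhalf k
        _ ≤ ((1 / 2 : ℝ) ^ k * δ₀) / 2 := by linarith
        _ = (1 / 2 : ℝ) ^ (k + 1) * δ₀ := by ring
  have hδleδ₀ : ∀ k, δs k ≤ δ₀ := by
    intro k
    have h1 : (1 / 2 : ℝ) ^ k ≤ (1 / 2 : ℝ) ^ 0 :=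
      pow_le_pow_of_le_one (by norm_num) (by norm_num) (Nat.zero_le k)
    have := hδle k
    nlinarith
  have hδsmall : ∀ c : ℝ, 0 < c → ∃ l, 2 * δs l < c := by
    intro c hc
    obtain ⟨n, hn⟩ := exists_pow_lt_of_lt_one (half_pos hc) (by norm_num : (1 : ℝ) / 2 < 1)
    refine ⟨n, ?_⟩
    have h1 := hδle n
    have h2 : δ₀ ≤ 1 := min_le_right _ _
    have h3 : (0 : ℝ) ≤ (1 / 2 : ℝ) ^ n := pow_nonneg (by norm_num) n
    nlinarith
  have hynF : ∀ k, y ∉ F k := by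
    intro k hy'
    have h1 := mem_ball.mp (hFb k hy')
    have h2 : δs k ≤ dist y x₀ := (hδleδ₀ k).trans (min_le_left _ _)
    linarith
  have hFneΩ : ∀ k, F k ≠ Ω := fun k h => hynF k (h ▸ hyΩ)
  have hx₀clF : ∀ k, x₀ ∈ closure (F k) := fun k =>
    closure_mono inter_subset_left (hFcl k 0)
  -- relative boundaries are nonempty
  have hfrne : ∀ k, (Ω ∩ frontier (F k)).Nonempty := by
    intro k
    obtain ⟨z, hz⟩ := hFne k
    exact aux_frontier_cross hΩconn.isPreconnected ⟨z, hFΩ k hz, hz⟩ ⟨y, hyΩ, hynF k⟩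
  -- frontier distance bound
  have hsetd : ∀ k, 0 < setDist (Ω ∩ frontier (F (k + 1))) (Ω ∩ frontier (F k)) := by
    intro k
    refine lt_of_lt_of_le (half_pos (hεpos k)) (le_setDist (hfrne (k + 1)) (hfrne k) ?_)
    rintro a ⟨haΩ, hafr⟩ b ⟨hbΩ, hbfr⟩
    have ha' : dist a x₀ ≤ δs (k + 1) := by
      have h1 : a ∈ closure (Metric.ball x₀ (δs (k + 1))) :=
        closure_mono (hFb (k + 1)) (frontier_subset_closure hafr)
      have h2 := Metric.closure_ball_subset_closedBall h1
      exact mem_closedBall.mp h2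
    have hb' : εs k ≤ dist b x₀ := by
      by_contra h
      push_neg at h
      exact (Set.eq_empty_iff_forall_notMem.mp (hFfr k) b) ⟨⟨hbΩ, hbfr⟩, mem_ball.mpr h⟩
    have h3 := hδεhalf k
    have h4 := dist_triangle b a x₀
    rw [dist_comm a b]
    linarith
  -- the impression of F is {x₀}
  have himp : (⋂ k, closure (F k)) = {x₀} := by
    apply Set.eq_singleton_iff_unique_mem.mpr
    refine ⟨Set.mem_iInter.mpr hx₀clF, ?_⟩
    intro z hz
    rw [Set.mem_iInter] at hz
    have hd : ∀ k, dist z x₀ ≤ δs k := by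
      intro k
      have h1 : z ∈ closure (Metric.ball x₀ (δs k)) := closure_mono (hFb k) (hz k)
      exact mem_closedBall.mp (Metric.closure_ball_subset_closedBall h1)
    by_contra hne
    have hdz : 0 < dist z x₀ := dist_pos.mpr hne
    obtain ⟨l, hl⟩ := hδsmall _ hdz
    have := hd l
    have := hδpos l
    linarith
  -- the acceptability of each F k
  have hFacc : ∀ k, Acceptable Ω (F k) := by
    intro k
    exact ⟨Metric.isBounded_ball.subset (hFb k), ⟨hFne k, hFpc k⟩, hFΩ k, hFneΩ k,
      ⟨x₀, hx₀clF k, hx₀⟩⟩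
  have hFchain : IsChainIn Ω F := by
    refine ⟨hFacc, hFsub, hsetd, ?_⟩
    rw [himp]
    exact Set.singleton_subset_iff.mpr hx₀
  -- the general dividing lemma
  have hdivgen : ∀ (H : ℕ → Set X) (k : ℕ),
      0 < setDist (Ω ∩ frontier (H (k + 1))) (Ω ∩ frontier (H k)) →
      H (k + 1) ⊆ H k → (∀ l, (F l ∩ H (k + 1)).Nonempty) → ∃ l, F l ⊆ H k := by
    intro H k hd hsubH hmeet
    obtain ⟨l, hl⟩ := hδsmall _ hd
    refine ⟨l, ?_⟩
    by_contra hns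
    obtain ⟨z, hzF, hzH⟩ := Set.not_subset.mp hns
    obtain ⟨a, haF, hafr⟩ := aux_frontier_cross (hFpc l) (hmeet l)
      ⟨z, hzF, fun h => hzH (hsubH h)⟩
    obtain ⟨b, hbF, hbfr⟩ := aux_frontier_cross (hFpc l)
      ((hmeet l).mono (inter_subset_inter_right _ hsubH)) ⟨z, hzF, hzH⟩
    have h1 : setDist (Ω ∩ frontier (H (k + 1))) (Ω ∩ frontier (H k)) ≤ dist a b :=
      setDist_le_dist ⟨hFΩ l haF, hafr⟩ ⟨hFΩ l hbF, hbfr⟩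
    have h2 : dist a x₀ < δs l := mem_ball.mp (hFb l haF)
    have h3 : dist b x₀ < δs l := mem_ball.mp (hFb l hbF)
    have h4 := dist_triangle a x₀ b
    rw [dist_comm x₀ b] at h4
    linarith
  -- F divides E
  have hDivFE : Divides F E := by
    intro k
    exact hdivgen E k (hEd k) (hEm k)
      (fun l => (closure_nonempty_iff.mp ⟨x₀, hFcl l (k + 1)⟩))
  -- F is prime
  have hprime : ∀ H : ℕ → Set X, IsChainIn Ω H → Divides H F → EquivChains H F := by
    intro H hHchain hHdiv
    refine ⟨hHdiv, ?_⟩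
    intro k
    have hHmono : Antitone H := antitone_nat_of_succ_le hHchain.2.1
    refine hdivgen H k (hHchain.2.2.1 k) (hHchain.2.1 k) ?_
    intro l
    obtain ⟨l', hl'⟩ := hHdiv l
    have hne : (H (max l' (k + 1))).Nonempty := (hHchain.1 _).2.1.1
    exact hne.mono (Set.subset_inter
      ((hHmono (le_max_left l' (k + 1))).trans hl')
      (hHmono (le_max_right l' (k + 1))))
  refine ⟨F, ⟨hFchain, hprime⟩, himp, hDivFE, fun hEp => ?_⟩
  have hequiv := hEp.2 F hFchain hDivFE
  refine ⟨hequiv, ?_⟩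
  apply Set.Subset.antisymm
  · intro z hz
    have hz' : z ∈ ⋂ k, closure (F k) := by
      rw [Set.mem_iInter]
      intro k
      obtain ⟨l, hl⟩ := hequiv.2 k
      exact closure_mono hl (Set.mem_iInter.mp hz l)
    rwa [himp] at hz'
  · exact Set.singleton_subset_iff.mpr hx₀I
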